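/- Let F ∈ F̃^k be a minimal spanning entering forest with k trees and suppose F^{k−1} ≠ ∅. Then φ^{k−1} − φ^k = min_{l ∈ K_F} ( λ°_{V(T^F_l)} − λ^•_{V(T^F_l)} ). -/

import Mathlib

open scoped Classical

namespace BarrierForests

variable {α : Type*} [Fintype α] [DecidableEq α]

/-- Total weight of a set of arcs. -/
def aweight (v : α → α → ℝ) (A : Finset (α × α)) : ℝ := ∑ a ∈ A, v a.1 a.2

/-- Weight `Υ^A_S` of the arcs of `A` whose tail lies in `S`. -/
def aweightOn (v : α → α → ℝ) (A : Finset (α × α)) (S : Finset α) : ℝ :=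
  ∑ a ∈ A.filter (fun a => a.1 ∈ S), v a.1 a.2

/-- The relation "there is an arc from `i` to `j` in `A`". -/
def arcRel (A : Finset (α × α)) : α → α → Prop := fun i j => (i, j) ∈ A

/-- Entering forest: every vertex has out-degree at most one, and there are no
directed cycles. -/
def IsEForest (A : Finset (α × α)) : Prop :=
  (∀ i j j', (i, j) ∈ A → (i, j') ∈ A → j = j') ∧
  ∀ i, ¬ Relation.TransGen (arcRel A) i i

/-- Roots of a (spanning) entering forest: the vertices with no outgoing arc. -/
noncomputable def rootSet (A : Finset (α × α)) : Finset α :=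
  Finset.univ.filter fun i => ∀ j, (i, j) ∉ A

/-- `𝓕^k`: spanning entering forests of the digraph with arc set `E`
having exactly `k` trees (equivalently, `k` roots). -/
def FSet (E : Finset (α × α)) (k : ℕ) : Set (Finset (α × α)) :=
  {A | A ⊆ E ∧ IsEForest A ∧ (rootSet A).card = k}

/-- The infimum (in `EReal`, so `⊤` for the empty family) of the `w`-weights of the
members of `s`. -/
noncomputable def minW {β : Type*} (s : Set β) (w : β → ℝ) : EReal :=
  sInf ((fun x => (w x : EReal)) '' s)

/-- `φ^k`: minimum weight of a spanning entering forest with `k` trees. -/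
noncomputable def phi (v : α → α → ℝ) (E : Finset (α × α)) (k : ℕ) : EReal :=
  minW (FSet E k) (aweight v)

/-- `F ∈ 𝓕̃^k`: minimal spanning entering forest with `k` trees. -/
def IsMinForest (v : α → α → ℝ) (E : Finset (α × α)) (k : ℕ) (F : Finset (α × α)) : Prop :=
  F ∈ FSet E k ∧ (aweight v F : EReal) = phi v E k

/-- Vertex set of the tree `T^F_i` of the entering forest `F` rooted at `i`:
all vertices from which `i` is reachable. -/
noncomputable def treeVerts (F : Finset (α × α)) (i : α) : Finset α :=
  Finset.univ.filter fun j => Relation.ReflTransGen (arcRel F) j i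

/-- Arc set of the tree `T^F_i`. -/
noncomputable def treeArcs (F : Finset (α × α)) (i : α) : Finset (α × α) :=
  F.filter fun a => a.1 ∈ treeVerts F i

/-- Induced subgraph (restriction) of the arc set `A` on the vertex set `S`. -/
def restrictArcs (A : Finset (α × α)) (S : Finset α) : Finset (α × α) :=
  A.filter fun a => a.1 ∈ S ∧ a.2 ∈ S

/-- `T ∈ 𝓣^{•q}_S`: `T` is an entering tree that is a subgraph of the digraph with
arc set `E`, with vertex set `S` and root `q`. -/
def IsTreeOn (E T : Finset (α × α)) (S : Finset α) (q : α) : Prop :=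
  q ∈ S ∧ T ⊆ E ∧ (∀ a ∈ T, a.1 ∈ S ∧ a.2 ∈ S) ∧
  (∀ i ∈ S, i ≠ q → ∃! j, (i, j) ∈ T) ∧
  (∀ j, (q, j) ∉ T) ∧
  ∀ i ∈ S, Relation.ReflTransGen (arcRel T) i q

/-- `λ^{•q}_S`. -/
noncomputable def lamB (v : α → α → ℝ) (E : Finset (α × α)) (S : Finset α) (q : α) : EReal :=
  minW {T | IsTreeOn E T S q} (aweight v)

/-- `λ^•_S = min_{q ∈ S} λ^{•q}_S`. -/
noncomputable def lamBul (v : α → α → ℝ) (E : Finset (α × α)) (S : Finset α) : EReal :=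
  minW {T | ∃ q ∈ S, IsTreeOn E T S q} (aweight v)

/-- `T ∈ 𝓣^{∘q}_S`: `T` has `|S| + 1` vertices, `T|_S` is an entering tree with vertex
set `S` and root `q`, and the single arc of `T` leaving `S` goes from `q` to the root
`r ∉ S` of `T`. -/
def IsCTreeOn (E T : Finset (α × α)) (S : Finset α) (q : α) : Prop :=
  ∃ r, r ∉ S ∧ ∃ T', IsTreeOn E T' S q ∧ (q, r) ∈ E ∧ T = insert (q, r) T'

/-- `λ^{∘q}_S`. -/
noncomputable def lamC (v : α → α → ℝ) (E : Finset (α × α)) (S : Finset α) (q : α) : EReal :=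
  minW {T | IsCTreeOn E T S q} (aweight v)

/-- `λ^∘_S = min_{q ∈ S} λ^{∘q}_S`. -/
noncomputable def lamCirc (v : α → α → ℝ) (E : Finset (α × α)) (S : Finset α) : EReal :=
  minW {T | ∃ q ∈ S, IsCTreeOn E T S q} (aweight v)

/-- `μ^∘_S`: minimum of `Υ^F_S` over the spanning entering forests `F ∈ 𝓕^∘_S`,
i.e. those in which every vertex of `S` has an outgoing arc. -/
noncomputable def muCirc (v : α → α → ℝ) (E : Finset (α × α)) (S : Finset α) : EReal :=
  minW {A | A ⊆ E ∧ IsEForest A ∧ ∀ i ∈ S, ∃ j, (i, j) ∈ A} fun A => aweightOn v A S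

/-- `G ∈ 𝓡^F_y`: `G` is a descendant of `F` at the root `y`, i.e. `y` is a root of
`F`, the roots of `G` are those of `F` except `y`, `G` induces `T^F_q` on the vertex
set of every tree of `F` other than `T^F_y`, and `G` induces a tree on the vertex set
of `T^F_y`. -/
def IsDescendant (E F G : Finset (α × α)) (y : α) : Prop :=
  y ∈ rootSet F ∧ rootSet G = rootSet F \ {y} ∧
  (∀ q ∈ rootSet G, restrictArcs G (treeVerts F q) = treeArcs F q) ∧
  ∃ a ∈ treeVerts F y, IsTreeOn E (restrictArcs G (treeVerts F y)) (treeVerts F y) a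

/-- A potential graph: a connected weighted undirected graph with a loop at every
vertex.  Edges are recorded as a symmetric reflexive set of ordered pairs, with a
symmetric weight function `p`. -/
structure PotGraph (α : Type*) [Fintype α] [DecidableEq α] where
  p : α → α → ℝ
  edges : Finset (α × α)
  symm_mem : ∀ i j, (i, j) ∈ edges → (j, i) ∈ edges
  loop_mem : ∀ i, (i, i) ∈ edges
  symm_w : ∀ i j, p i j = p j i
  connected : ∀ i j : α, Relation.ReflTransGen (fun a b => (a, b) ∈ edges ∧ a ≠ b) i j

/-- Arc set of the barrier digraph of the potential graph `P`: an arc `(i,j)`, `i ≠ j`,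
for each non-loop edge of `P`. -/
def barcs (P : PotGraph α) : Finset (α × α) := P.edges.filter fun a => a.1 ≠ a.2

/-- Arc weights of the barrier digraph: `v i j = p i j - p i i`. -/
def bw (P : PotGraph α) : α → α → ℝ := fun i j => P.p i j - P.p i i

/-- Weight of a set of undirected edges of `P`. -/
noncomputable def uweight (P : PotGraph α) (T : Finset (Sym2 α)) : ℝ :=
  ∑ e ∈ T, Sym2.lift ⟨P.p, P.symm_w⟩ e

/-- `T ∈ 𝓣_S`: `T` is an undirected tree that is a subgraph of `P` (loops unused)
with vertex set `S`: its edges are non-loop edges of `P` joining vertices of `S`,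
it is connected on `S`, and it has `|S| - 1` edges. -/
def IsUTreeOn (P : PotGraph α) (T : Finset (Sym2 α)) (S : Finset α) : Prop :=
  (∀ e ∈ T, ∃ i j, i ≠ j ∧ e = s(i, j) ∧ (i, j) ∈ P.edges ∧ i ∈ S ∧ j ∈ S) ∧
  (∀ i ∈ S, ∀ j ∈ S, Relation.ReflTransGen (fun a b => s(a, b) ∈ T) i j) ∧
  T.card + 1 = S.card

/-- `ν_S`: minimum weight of an undirected tree on `S` that is a subgraph of `P`. -/
noncomputable def nu (P : PotGraph α) (S : Finset α) : EReal :=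
  minW {T | IsUTreeOn P T S} (uweight P)

/-- The underlying undirected edge set of a set of arcs. -/
def undir (A : Finset (α × α)) : Finset (Sym2 α) := A.image fun a => s(a.1, a.2)

/-- `Tq` is the entering tree (with root `q`, vertex set `S`, subgraph of the barrier
digraph of `P`) corresponding to the undirected tree `T`: it is obtained from `T` by
directing all edges toward `q` and replacing the weight of each arc `(i,j)` by
`v i j = p i j - p i i`. -/
def Corresponds (P : PotGraph α) (Tq : Finset (α × α)) (T : Finset (Sym2 α))
    (S : Finset α) (q : α) : Prop :=
  IsTreeOn (barcs P) Tq S q ∧ undir Tq = T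

end BarrierForests

/-!
Replacing the tree `T^F_l` of a minimal forest `F` by another entering tree on its vertex set
`S` gives a forest with `k` trees, so `λ^•_S` is the weight of `T^F_l`; replacing it by a tree
of `𝓣^{∘q}_S` gives one with `k - 1` trees, whence `≤`.

For `≥`, let `G ∈ 𝓕^{k-1}`. Some arc `(x, w)` of `G` joins two trees of `F`; choose it with no
other such arc starting above `x` in `G`. Then the set `X` of `G`-ancestors of `x` lies in the
`F`-tree of `x`, and exchanging the arcs with tail in `X` between `F` and `G` preserves the
total weight and the total number of roots. If the root `a` of that `F`-tree lies in `X`, the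
exchanged `F` is `F` with `T^F_a` replaced by a tree of `𝓣^{∘x}`, and the exchanged `G` has
`k` trees, so it is no lighter than `F`. Otherwise the exchanged `G` is a forest in `𝓕^{k-1}`,
no heavier than `G` and with fewer arcs outside `F`, and we induct.
-/

namespace BarrierForests

open Relation Finset

theorem minW_le {β : Type*} {s : Set β} {w : β → ℝ} {x : β} (hx : x ∈ s) :
    minW s w ≤ w x :=
  sInf_le ⟨x, hx, rfl⟩

theorem le_minW {β : Type*} {s : Set β} {w : β → ℝ} {c : EReal}
    (h : ∀ x ∈ s, c ≤ w x) : c ≤ minW s w :=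
  le_sInf fun _ ⟨x, hx, hb⟩ => hb ▸ h x hx

section Paths

variable {α : Type*} {A B C : Finset (α × α)} {p : α → Prop} {i j r r' : α}

def OutdegLeOne (A : Finset (α × α)) : Prop :=
  ∀ i j j', (i, j) ∈ A → (i, j') ∈ A → j = j'

def Acyclic (A : Finset (α × α)) : Prop := ∀ i, ¬ TransGen (arcRel A) i i

def ArcClosed (A : Finset (α × α)) (p : α → Prop) : Prop := ∀ e ∈ A, p e.1 → p e.2

theorem Acyclic.subset (hB : Acyclic B) (h : A ⊆ B) : Acyclic A :=
  fun i hi => hB i (TransGen.mono (fun _ _ hab => h hab) _ _ hi)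

theorem IsEForest.subset (hB : IsEForest B) (h : A ⊆ B) : IsEForest A :=
  ⟨fun i j j' hj hj' => hB.1 i j j' (h hj) (h hj'), Acyclic.subset hB.2 h⟩

theorem Acyclic.wellFounded [Finite α] (hA : Acyclic A) : WellFounded (TransGen (arcRel A)) :=
  @Finite.wellFounded_of_trans_of_irrefl _ _ _ ⟨fun _ _ _ => TransGen.trans⟩ ⟨hA⟩

theorem Acyclic.wellFounded_flip [Finite α] (hA : Acyclic A) :
    WellFounded (flip (TransGen (arcRel A))) :=
  @Finite.wellFounded_of_trans_of_irrefl _ _ _ ⟨fun _ _ _ hab hbc => hbc.trans hab⟩ ⟨hA⟩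

theorem ArcClosed.reflTransGen (hp : ArcClosed A p) (h : ReflTransGen (arcRel A) i j)
    (hi : p i) : p j := by
  induction h with
  | refl => exact hi
  | tail _ hbc ih => exact hp _ hbc ih

theorem transGen_of_forall_arc_on_path (h : TransGen (arcRel A) i j)
    (hB : ∀ u c, (u, c) ∈ A → ReflTransGen (arcRel A) i u → ReflTransGen (arcRel A) c j →
      (u, c) ∈ B) :
    TransGen (arcRel B) i j := by
  induction h with
  | single hij => exact .single (hB _ _ hij .refl .refl)
  | tail hib hbj ih =>
    exact .tail (ih fun u c huc hiu hcb => hB u c huc hiu (hcb.tail hbj))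
      (hB _ _ hbj hib.to_reflTransGen .refl)

theorem transGen_self_of_reflTransGen (hA : OutdegLeOne A)
    (hi : TransGen (arcRel A) i i) (h : ReflTransGen (arcRel A) i j) :
    TransGen (arcRel A) j j := by
  induction h with
  | refl => exact hi
  | tail _ hbc ih =>
    obtain ⟨c, hbc', hcb⟩ := TransGen.head'_iff.1 ih
    exact TransGen.tail' (hA _ _ _ hbc' hbc ▸ hcb) hbc

/-- A cycle cannot leave `p` and come back, so it lies inside `p` or outside of it. -/
theorem acyclic_of_arcClosed (hp : ArcClosed A p) (hB : Acyclic B) (hC : Acyclic C)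
    (hAB : ∀ e ∈ A, ¬ p e.1 → ¬ p e.2 → e ∈ B) (hAC : ∀ e ∈ A, p e.1 → e ∈ C) :
    Acyclic A := by
  intro i hi
  by_cases hpi : p i
  · exact hC i (transGen_of_forall_arc_on_path hi fun u c huc hiu _ =>
      hAC _ huc (hp.reflTransGen hiu hpi))
  · exact hB i (transGen_of_forall_arc_on_path hi fun u c huc _ hci =>
      hAB _ huc (fun hpu => hpi (hp.reflTransGen (hci.head huc) hpu))
        (fun hpc => hpi (hp.reflTransGen hci hpc)))

variable [Fintype α] [DecidableEq α]

theorem mem_rootSet : i ∈ rootSet A ↔ ∀ j, (i, j) ∉ A := by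
  simp [rootSet]

theorem eq_of_mem_rootSet_of_reflTransGen (hr : r ∈ rootSet A)
    (h : ReflTransGen (arcRel A) r j) : r = j := by
  rcases h.cases_head with rfl | ⟨c, hrc, -⟩
  · rfl
  · exact absurd hrc (mem_rootSet.1 hr c)

theorem unique_reachable_root (hA : OutdegLeOne A)
    (hr : r ∈ rootSet A) (hr' : r' ∈ rootSet A)
    (h : ReflTransGen (arcRel A) i r) (h' : ReflTransGen (arcRel A) i r') : r = r' := by
  induction h using ReflTransGen.head_induction_on with
  | refl => exact eq_of_mem_rootSet_of_reflTransGen hr h'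
  | head hic _ ih =>
    rcases h'.cases_head with rfl | ⟨c', hic', hc'⟩
    · exact absurd hic (mem_rootSet.1 hr' _)
    · exact ih (hA _ _ _ hic' hic ▸ hc')

theorem exists_mem_rootSet_reflTransGen (hA : IsEForest A) (i : α) :
    ∃ r ∈ rootSet A, ReflTransGen (arcRel A) i r := by
  induction i using (Acyclic.wellFounded_flip hA.2).induction with
  | _ i ih =>
  by_cases hi : i ∈ rootSet A
  · exact ⟨i, hi, .refl⟩
  · obtain ⟨j, hij⟩ : ∃ j, (i, j) ∈ A := by simpa [mem_rootSet] using hi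
    obtain ⟨r, hr, hjr⟩ := ih j (.single hij)
    exact ⟨r, hr, hjr.head hij⟩

theorem acyclic_of_forall_exists_mem_rootSet
    (hA : OutdegLeOne A)
    (h : ∀ i, ∃ r ∈ rootSet A, ReflTransGen (arcRel A) i r) : Acyclic A := by
  intro i hi
  obtain ⟨r, hr, hir⟩ := h i
  obtain ⟨c, hrc, -⟩ := TransGen.head'_iff.1 (transGen_self_of_reflTransGen hA hi hir)
  exact mem_rootSet.1 hr c hrc

end Paths

section TreeVerts

variable {α : Type*} [Fintype α] {A : Finset (α × α)} {i j a : α}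

theorem mem_treeVerts : i ∈ treeVerts A a ↔ ReflTransGen (arcRel A) i a := by
  simp [treeVerts]

theorem self_mem_treeVerts : a ∈ treeVerts A a :=
  mem_treeVerts.2 .refl

theorem mem_treeVerts_of_mem (hA : OutdegLeOne A)
    (hij : (i, j) ∈ A) (hi : i ∈ treeVerts A a) (hia : i ≠ a) : j ∈ treeVerts A a := by
  rcases (mem_treeVerts.1 hi).cases_head with rfl | ⟨c, hic, hca⟩
  · exact absurd rfl hia
  · exact mem_treeVerts.2 (hA _ _ _ hic hij ▸ hca)

theorem arcClosed_not_mem_treeVerts (A : Finset (α × α)) (a : α) :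
    ArcClosed A (· ∉ treeVerts A a) :=
  fun _ he hj hi => hj (mem_treeVerts.2 (.head he (mem_treeVerts.1 hi)))

theorem exists_mem_of_mem_treeVerts {w u : α} (hxw : (a, w) ∈ A) (hu : u ∈ treeVerts A a) :
    ∃ j, (u, j) ∈ A := by
  rcases (mem_treeVerts.1 hu).cases_head with rfl | ⟨c, huc, -⟩
  exacts [⟨w, hxw⟩, ⟨c, huc⟩]

end TreeVerts

section Roots

variable {α : Type*} [Fintype α] [DecidableEq α] {A : Finset (α × α)} {i j a : α}

noncomputable def rootOf (A : Finset (α × α)) (i : α) : α :=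
  if h : ∃ r ∈ rootSet A, ReflTransGen (arcRel A) i r then h.choose else i

theorem rootOf_mem_rootSet (hA : IsEForest A) (i : α) : rootOf A i ∈ rootSet A := by
  have h := exists_mem_rootSet_reflTransGen hA i
  rw [rootOf, dif_pos h]
  exact h.choose_spec.1

theorem reflTransGen_rootOf (hA : IsEForest A) (i : α) :
    ReflTransGen (arcRel A) i (rootOf A i) := by
  have h := exists_mem_rootSet_reflTransGen hA i
  rw [rootOf, dif_pos h]
  exact h.choose_spec.2

theorem rootOf_eq (hA : IsEForest A) (ha : a ∈ rootSet A) (h : ReflTransGen (arcRel A) i a) :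
    rootOf A i = a :=
  unique_reachable_root hA.1 (rootOf_mem_rootSet hA i) ha (reflTransGen_rootOf hA i) h

theorem rootOf_eq_rootOf (hA : IsEForest A) (h : ReflTransGen (arcRel A) i j) :
    rootOf A i = rootOf A j :=
  rootOf_eq hA (rootOf_mem_rootSet hA j) (h.trans (reflTransGen_rootOf hA j))

theorem rootOf_of_mem_rootSet (hA : IsEForest A) (ha : a ∈ rootSet A) : rootOf A a = a :=
  rootOf_eq hA ha .refl

theorem mem_treeVerts_iff_rootOf (hA : IsEForest A) (ha : a ∈ rootSet A) :
    i ∈ treeVerts A a ↔ rootOf A i = a :=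
  mem_treeVerts.trans ⟨rootOf_eq hA ha, fun h => h ▸ reflTransGen_rootOf hA i⟩

theorem arcClosed_treeVerts (hA : IsEForest A) (ha : a ∈ rootSet A) :
    ArcClosed A (· ∈ treeVerts A a) :=
  fun e he hi => mem_treeVerts_of_mem hA.1 he hi fun h => mem_rootSet.1 (h ▸ ha) e.2 he

theorem filter_rootSet_treeVerts_eq_empty {w : α} (hw : (a, w) ∈ A) :
    (rootSet A).filter (· ∈ treeVerts A a) = ∅ :=
  filter_eq_empty_iff.2 fun _ hu ha =>
    (exists_mem_of_mem_treeVerts hw ha).elim fun j hj => mem_rootSet.1 hu j hj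

theorem filter_rootSet_eq_of_subset_treeVerts {X : Finset α} (ha : a ∈ rootSet A)
    (hX : X ⊆ treeVerts A a) :
    (rootSet A).filter (· ∈ X) = ({a} : Finset α).filter (· ∈ X) := by
  ext l
  simp only [mem_filter, mem_singleton]
  constructor
  · rintro ⟨hl, hlX⟩
    exact ⟨eq_of_mem_rootSet_of_reflTransGen hl (mem_treeVerts.1 (hX hlX)), hlX⟩
  · rintro ⟨rfl, hlX⟩
    exact ⟨ha, hlX⟩

end Roots

section Splice

variable {α : Type*} [DecidableEq α] {v : α → α → ℝ} {A B E : Finset (α × α)}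
  {X : Finset α} {e : α × α}

def splice (A B : Finset (α × α)) (X : Finset α) : Finset (α × α) :=
  A.filter (fun e => e.1 ∉ X) ∪ B.filter (fun e => e.1 ∈ X)

theorem mem_splice : e ∈ splice A B X ↔ e ∈ A ∧ e.1 ∉ X ∨ e ∈ B ∧ e.1 ∈ X := by
  simp [splice]

theorem splice_subset (hA : A ⊆ E) (hB : B ⊆ E) : splice A B X ⊆ E := by
  intro e he
  rcases mem_splice.1 he with ⟨h, -⟩ | ⟨h, -⟩
  exacts [hA h, hB h]

theorem OutdegLeOne.splice (hA : OutdegLeOne A) (hB : OutdegLeOne B) :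
    OutdegLeOne (splice A B X) := by
  intro i j j' hj hj'
  rcases mem_splice.1 hj with ⟨h, hi⟩ | ⟨h, hi⟩ <;>
    rcases mem_splice.1 hj' with ⟨h', hi'⟩ | ⟨h', hi'⟩
  exacts [hA _ _ _ h h', absurd hi' hi, absurd hi hi', hB _ _ _ h h']

theorem IsEForest.splice_of_arcClosed_left (hA : IsEForest A) (hB : IsEForest B)
    (hX : ArcClosed A (· ∉ X)) : IsEForest (splice A B X) := by
  refine ⟨OutdegLeOne.splice hA.1 hB.1,
    acyclic_of_arcClosed (p := (· ∉ X)) ?_ hB.2 hA.2 ?_ ?_⟩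
  · intro e he
    rcases mem_splice.1 he with ⟨h, -⟩ | ⟨-, h⟩
    exacts [hX e h, absurd h]
  · intro e he h _
    rcases mem_splice.1 he with ⟨-, h'⟩ | ⟨h', -⟩
    exacts [absurd h' h, h']
  · intro e he h
    rcases mem_splice.1 he with ⟨h', -⟩ | ⟨-, h'⟩
    exacts [h', absurd h' h]

theorem IsEForest.splice_of_arcClosed_right (hA : IsEForest A) (hB : IsEForest B)
    (hX : ArcClosed B (· ∈ X)) : IsEForest (splice A B X) := by
  refine ⟨OutdegLeOne.splice hA.1 hB.1,
    acyclic_of_arcClosed (p := (· ∈ X)) ?_ hA.2 hB.2 ?_ ?_⟩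
  · intro e he
    rcases mem_splice.1 he with ⟨-, h⟩ | ⟨h, -⟩
    exacts [fun h' => absurd h' h, hX e h]
  · intro e he h _
    rcases mem_splice.1 he with ⟨h', -⟩ | ⟨-, h'⟩
    exacts [h', absurd h' h]
  · intro e he h
    rcases mem_splice.1 he with ⟨-, h'⟩ | ⟨h', -⟩
    exacts [absurd h h', h']

theorem card_rootSet_splice [Fintype α] : #(rootSet (splice A B X)) =
    #((rootSet A).filter (· ∉ X)) + #((rootSet B).filter (· ∈ X)) := by
  rw [← card_union_of_disjoint (disjoint_filter_filter_not _ _ _).symm]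
  congr 1
  ext i
  by_cases hi : i ∈ X <;> simp [mem_rootSet, mem_splice, hi]

theorem aweight_splice : aweight v (splice A B X) =
    aweight v A - aweight v (A.filter (·.1 ∈ X)) + aweight v (B.filter (·.1 ∈ X)) := by
  have hA := sum_filter_add_sum_filter_not A (·.1 ∈ X) fun e => v e.1 e.2
  rw [aweight, splice, sum_union (disjoint_filter_filter_not _ _ _).symm]
  simp only [aweight] at hA ⊢
  linarith

theorem aweight_splice_add_aweight_splice :
    aweight v (splice A B X) + aweight v (splice B A X) = aweight v A + aweight v B := by
  rw [aweight_splice, aweight_splice]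
  ring

theorem card_sdiff_splice_lt {x w : α} (hxw : (x, w) ∈ B) (hxA : (x, w) ∉ A) (hx : x ∈ X) :
    #(splice B A X \ A) < #(B \ A) := by
  refine card_lt_card ⟨fun e he => ?_, fun h => ?_⟩
  · rw [mem_sdiff, mem_splice] at he
    rw [mem_sdiff]
    tauto
  · have := h (mem_sdiff.2 ⟨hxw, hxA⟩)
    simp [mem_splice, hx, hxA] at this

theorem splice_filter_splice {S : Finset α} (hXS : X ⊆ S) :
    splice A ((splice A B X).filter (·.1 ∈ S)) S = splice A B X := by
  ext e
  simp only [mem_splice, mem_filter]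
  have := @hXS e.1
  tauto

end Splice

section CircleTrees

variable {α : Type*} [DecidableEq α] {E T : Finset (α × α)} {S : Finset α} {q : α}

theorem IsCTreeOn.mem (hT : IsCTreeOn E T S q) : q ∈ S := by
  obtain ⟨-, -, T', hT', -, -⟩ := hT
  exact hT'.1

theorem IsCTreeOn.subset (hT : IsCTreeOn E T S q) : T ⊆ E := by
  obtain ⟨r, -, T', hT', hqr, rfl⟩ := hT
  exact insert_subset hqr hT'.2.1

theorem IsCTreeOn.fst_mem (hT : IsCTreeOn E T S q) : ∀ e ∈ T, e.1 ∈ S := by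
  obtain ⟨r, -, T', hT', -, rfl⟩ := hT
  intro e he
  rcases mem_insert.1 he with rfl | he
  exacts [hT'.1, (hT'.2.2.1 e he).1]

theorem lamCirc_le {v : α → α → ℝ} (hT : IsCTreeOn E T S q) :
    lamCirc v E S ≤ aweight v T :=
  minW_le ⟨q, hT.mem, hT⟩

end CircleTrees

section Trees

variable {α : Type*} [Fintype α] [DecidableEq α] {E F T : Finset (α × α)} {S : Finset α}
  {a q : α}

theorem IsTreeOn.isEForest (hT : IsTreeOn E T S q) : IsEForest T := by
  obtain ⟨-, -, hS, huniq, hq, hreach⟩ := hT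
  have hout : OutdegLeOne T := by
    intro i j j' hj hj'
    by_cases hiq : i = q
    · exact absurd (hiq ▸ hj) (hq j)
    · exact (huniq i (hS _ hj).1 hiq).unique hj hj'
  refine ⟨hout, acyclic_of_forall_exists_mem_rootSet hout fun i => ?_⟩
  by_cases hi : i ∈ S
  · exact ⟨q, mem_rootSet.2 hq, hreach i hi⟩
  · exact ⟨i, mem_rootSet.2 fun j hj => hi (hS _ hj).1, .refl⟩

theorem IsTreeOn.filter_rootSet (hT : IsTreeOn E T S q) : (rootSet T).filter (· ∈ S) = {q} := by
  ext i
  simp only [mem_filter, mem_singleton, mem_rootSet]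
  constructor
  · rintro ⟨hi, hiS⟩
    by_contra hiq
    obtain ⟨j, hj, -⟩ := hT.2.2.2.1 i hiS hiq
    exact hi j hj
  · rintro rfl
    exact ⟨hT.2.2.2.2.1, hT.1⟩

theorem isTreeOn_of_isEForest (hTE : T ⊆ E) (hT : IsEForest T) (hq : q ∈ S)
    (hS : ∀ e ∈ T, e.1 ∈ S ∧ e.2 ∈ S) (hqT : ∀ j, (q, j) ∉ T)
    (harc : ∀ i ∈ S, i ≠ q → ∃ j, (i, j) ∈ T) : IsTreeOn E T S q := by
  refine ⟨hq, hTE, hS, fun i hi hiq => ?_, hqT, fun i hi => ?_⟩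
  · obtain ⟨j, hj⟩ := harc i hi hiq
    exact ⟨j, hj, fun j' hj' => hT.1 _ _ _ hj' hj⟩
  · obtain ⟨r, hr, hir⟩ := exists_mem_rootSet_reflTransGen hT i
    have hrS : r ∈ S := ArcClosed.reflTransGen (fun e he _ => (hS e he).2) hir hi
    obtain rfl : r = q := by
      by_contra hrq
      obtain ⟨j, hj⟩ := harc r hrS hrq
      exact mem_rootSet.1 hr j hj
    exact hir

theorem treeArcs_isTreeOn (hFE : F ⊆ E) (hF : IsEForest F) (ha : a ∈ rootSet F) :
    IsTreeOn E (treeArcs F a) (treeVerts F a) a := by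
  refine isTreeOn_of_isEForest ((filter_subset _ _).trans hFE) (hF.subset (filter_subset _ _))
    self_mem_treeVerts (fun e he => ?_) (fun j hj => mem_rootSet.1 ha j (mem_filter.1 hj).1)
    fun i hi hia => ?_
  · have he' := mem_filter.1 he
    exact ⟨he'.2, arcClosed_treeVerts hF ha e he'.1 he'.2⟩
  · obtain ⟨j, hij, -⟩ := (mem_treeVerts.1 hi).cases_head.resolve_left hia
    exact ⟨j, mem_filter.2 ⟨hij, hi⟩⟩

theorem IsCTreeOn.filter_rootSet (hT : IsCTreeOn E T S q) :
    (rootSet T).filter (· ∈ S) = ∅ := by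
  obtain ⟨r, -, T', hT', -, rfl⟩ := hT
  refine filter_eq_empty_iff.2 fun i hi hiS => ?_
  rw [mem_rootSet] at hi
  by_cases hiq : i = q
  · exact hi r (hiq ▸ mem_insert_self _ _)
  · obtain ⟨j, hj, -⟩ := hT'.2.2.2.1 i hiS hiq
    exact hi j (mem_insert_of_mem hj)

theorem IsCTreeOn.isEForest (hT : IsCTreeOn E T S q) : IsEForest T := by
  have hroot : ∀ i ∉ S, i ∈ rootSet T := fun i hi =>
    mem_rootSet.2 fun j hj => hi (hT.fst_mem _ hj)
  obtain ⟨r, hrS, T', hT', -, rfl⟩ := hT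
  have hout : OutdegLeOne (insert (q, r) T') := by
    intro i j j' hj hj'
    rcases mem_insert.1 hj with h | h <;> rcases mem_insert.1 hj' with h' | h'
    · rw [(Prod.mk_inj.1 h).2, (Prod.mk_inj.1 h').2]
    · exact absurd ((Prod.mk_inj.1 h).1 ▸ h') (hT'.2.2.2.2.1 _)
    · exact absurd ((Prod.mk_inj.1 h').1 ▸ h) (hT'.2.2.2.2.1 _)
    · exact hT'.isEForest.1 _ _ _ h h'
  refine ⟨hout, acyclic_of_forall_exists_mem_rootSet hout fun i => ?_⟩
  by_cases hi : i ∈ S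
  · refine ⟨r, hroot r hrS, .tail ?_ (mem_insert_self _ _)⟩
    exact ReflTransGen.mono (fun _ _ h => mem_insert_of_mem h) _ _ (hT'.2.2.2.2.2 i hi)
  · exact ⟨i, hroot i hi, .refl⟩

end Trees

section Weights

variable {α : Type*} [Fintype α] [DecidableEq α] {v : α → α → ℝ}
  {E F F' T : Finset (α × α)} {a : α} {k : ℕ}

theorem IsMinForest.aweight_le (hF : IsMinForest v E k F) (hF' : F' ∈ FSet E k) :
    aweight v F ≤ aweight v F' :=
  EReal.coe_le_coe_iff.1 (hF.2.trans_le (minW_le hF'))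

theorem splice_treeVerts_mem_FSet (hF : F ∈ FSet E k) (ha : a ∈ rootSet F) (hTE : T ⊆ E)
    (hT : IsEForest T) :
    splice F T (treeVerts F a) ∈
      FSet E (k + #((rootSet T).filter (· ∈ treeVerts F a)) - 1) := by
  refine ⟨splice_subset hF.1 hTE,
    hF.2.1.splice_of_arcClosed_left hT (arcClosed_not_mem_treeVerts F a), ?_⟩
  have hsplit := card_filter_add_card_filter_not (s := rootSet F) (· ∈ treeVerts F a)
  rw [filter_rootSet_eq_of_subset_treeVerts ha subset_rfl, filter_singleton,
    if_pos self_mem_treeVerts, card_singleton, hF.2.2] at hsplit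
  rw [card_rootSet_splice]
  omega

theorem aweight_splice_treeVerts (hT : ∀ e ∈ T, e.1 ∈ treeVerts F a) :
    aweight v (splice F T (treeVerts F a)) =
      aweight v F - aweight v (treeArcs F a) + aweight v T := by
  rw [aweight_splice, filter_true_of_mem hT]
  rfl

theorem lamBul_treeVerts_eq (hF : IsMinForest v E k F) (ha : a ∈ rootSet F) :
    lamBul v E (treeVerts F a) = aweight v (treeArcs F a) := by
  refine le_antisymm (minW_le ⟨a, self_mem_treeVerts, treeArcs_isTreeOn hF.1.1 hF.1.2.1 ha⟩)
    (le_minW ?_)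
  rintro T ⟨q, -, hT⟩
  have hle := hF.aweight_le (by
    simpa [hT.filter_rootSet] using splice_treeVerts_mem_FSet hF.1 ha hT.2.1 hT.isEForest)
  rw [aweight_splice_treeVerts fun e he => (hT.2.2.1 e he).1] at hle
  exact_mod_cast (by linarith : aweight v (treeArcs F a) ≤ aweight v T)

theorem phi_sub_one_sub_le (hF : F ∈ FSet E k) (ha : a ∈ rootSet F) :
    phi v E (k - 1) - aweight v F ≤ lamCirc v E (treeVerts F a) - aweight v (treeArcs F a) := by
  rw [EReal.le_sub_iff_add_le (.inl (EReal.coe_ne_bot _)) (.inl (EReal.coe_ne_top _))]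
  refine le_minW ?_
  rintro T ⟨q, -, hT⟩
  have hle : phi v E (k - 1) ≤ aweight v (splice F T (treeVerts F a)) := minW_le (by
    simpa [hT.filter_rootSet] using splice_treeVerts_mem_FSet hF ha hT.subset hT.isEForest)
  rw [aweight_splice_treeVerts hT.fst_mem] at hle
  calc phi v E (k - 1) - aweight v F + aweight v (treeArcs F a)
      ≤ ((aweight v F - aweight v (treeArcs F a) + aweight v T : ℝ) : EReal) - aweight v F
          + aweight v (treeArcs F a) := add_le_add_left (EReal.sub_le_sub hle le_rfl) _
    _ = aweight v T := by norm_cast; ring_nf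

end Weights

section Exchange

variable {α : Type*} [Fintype α] [DecidableEq α] {v : α → α → ℝ}
  {E F G : Finset (α × α)} {x w : α} {k : ℕ}

structure IsMinCrossArc (F G : Finset (α × α)) (x w : α) : Prop where
  mem : (x, w) ∈ G
  rootOf_ne : rootOf F w ≠ rootOf F x
  not_transGen : ∀ z y, (z, y) ∈ G → rootOf F y ≠ rootOf F z → ¬ TransGen (arcRel G) z x

/-- Without arcs between trees of `F`, `rootOf G` would embed the roots of `F` into those
of `G`. -/
theorem exists_isMinCrossArc (hF : IsEForest F) (hG : IsEForest G)
    (hlt : #(rootSet G) < #(rootSet F)) : ∃ x w, IsMinCrossArc F G x w := by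
  have hcross : ∃ z y, (z, y) ∈ G ∧ rootOf F y ≠ rootOf F z := by
    by_contra! h
    have hpath : ∀ i j, ReflTransGen (arcRel G) i j → rootOf F j = rootOf F i :=
      fun i j hij => ArcClosed.reflTransGen (p := (rootOf F · = rootOf F i))
        (fun e he h' => (h _ _ he).trans h') hij rfl
    refine hlt.not_ge (card_le_card_of_injOn (rootOf G) (fun l _ => rootOf_mem_rootSet hG l)
      fun l hl l' hl' he => ?_)
    rw [← rootOf_of_mem_rootSet hF hl, ← rootOf_of_mem_rootSet hF hl',
      ← hpath _ _ (reflTransGen_rootOf hG l), ← hpath _ _ (reflTransGen_rootOf hG l'), he]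
  obtain ⟨z, y, hzy⟩ := hcross
  obtain ⟨x, ⟨w, hxw, hne⟩, hmin⟩ := (Acyclic.wellFounded hG.2).has_min
    {z | ∃ y, (z, y) ∈ G ∧ rootOf F y ≠ rootOf F z} ⟨z, y, hzy⟩
  exact ⟨x, w, hxw, hne, fun z y hzy hne' => hmin z ⟨y, hzy, hne'⟩⟩

theorem IsMinCrossArc.not_mem (hx : IsMinCrossArc F G x w) (hF : IsEForest F) : (x, w) ∉ F :=
  fun h => hx.rootOf_ne (rootOf_eq_rootOf hF (.single h)).symm

theorem IsMinCrossArc.not_mem_treeVerts (hx : IsMinCrossArc F G x w) (hF : IsEForest F) :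
    w ∉ treeVerts F (rootOf F x) :=
  fun h => hx.rootOf_ne ((mem_treeVerts_iff_rootOf hF (rootOf_mem_rootSet hF x)).1 h)

theorem IsMinCrossArc.treeVerts_subset (hx : IsMinCrossArc F G x w) (hF : IsEForest F) :
    treeVerts G x ⊆ treeVerts F (rootOf F x) := by
  intro u hu
  rw [mem_treeVerts_iff_rootOf hF (rootOf_mem_rootSet hF x)]
  induction (mem_treeVerts.1 hu) using ReflTransGen.head_induction_on with
  | refl => rfl
  | head huc hcx ih =>
    exact by_contra fun hne => hx.not_transGen _ _ huc (fun h => hne (h.symm.trans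
      (ih (mem_treeVerts.2 hcx)))) (.head' huc hcx)

theorem IsMinCrossArc.isEForest_splice (hx : IsMinCrossArc F G x w) (hF : IsEForest F)
    (hG : IsEForest G) : IsEForest (splice F G (treeVerts G x)) := by
  have hXS := hx.treeVerts_subset hF
  have hG' : IsEForest (splice F (G.erase (x, w)) (treeVerts G x)) := by
    refine hF.splice_of_arcClosed_right (hG.subset (erase_subset _ _)) ?_
    rintro ⟨i, j⟩ he hi
    obtain ⟨hne, heG⟩ := mem_erase.1 he
    exact mem_treeVerts_of_mem hG.1 heG hi fun h => hne (by subst h; rw [hG.1 _ _ _ heG hx.mem])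
  -- Only `(x, w)` leaves the `F`-tree of `x` and no arc enters it; inside that tree, the
  -- remaining arcs of `G` never leave `X`.
  refine ⟨OutdegLeOne.splice hF.1 hG.1,
    acyclic_of_arcClosed (p := (· ∉ treeVerts F (rootOf F x))) (fun e he hi => ?_) hG'.2 hF.2
      (fun e he hi hj => ?_) fun e he hi => ?_⟩
  · rcases mem_splice.1 he with ⟨he, -⟩ | ⟨-, hX⟩
    exacts [arcClosed_not_mem_treeVerts F _ e he hi, absurd (hXS hX) hi]
  · rcases mem_splice.1 he with ⟨he, hX⟩ | ⟨he, hX⟩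
    · exact mem_splice.2 (.inl ⟨he, hX⟩)
    · refine mem_splice.2 (.inr ⟨mem_erase.2 ⟨?_, he⟩, hX⟩)
      rintro rfl
      exact hj (hx.not_mem_treeVerts hF)
  · rcases mem_splice.1 he with ⟨he, -⟩ | ⟨-, hX⟩
    exacts [he, absurd (hXS hX) hi]

theorem IsMinCrossArc.isTreeOn_erase (hx : IsMinCrossArc F G x w) (hF : IsEForest F)
    (hG : IsEForest G) (hFE : F ⊆ E) (hGE : G ⊆ E) (haX : rootOf F x ∈ treeVerts G x) :
    IsTreeOn E
      (((splice F G (treeVerts G x)).filter (·.1 ∈ treeVerts F (rootOf F x))).erase (x, w))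
      (treeVerts F (rootOf F x)) x := by
  set X := treeVerts G x
  set S := treeVerts F (rootOf F x)
  have ha := rootOf_mem_rootSet hF x
  have hXS := hx.treeVerts_subset hF
  have hxX : x ∈ X := self_mem_treeVerts
  have hx_arc : ∀ j, (x, j) ∈ G → j = w := fun j h => hG.1 _ _ _ h hx.mem
  refine isTreeOn_of_isEForest ((erase_subset _ _).trans ((filter_subset _ _).trans
    (splice_subset hFE hGE))) ((hx.isEForest_splice hF hG).subset
    ((erase_subset _ _).trans (filter_subset _ _))) (hXS hxX) ?_ ?_ ?_
  · rintro ⟨i, j⟩ he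
    obtain ⟨hne, he⟩ := mem_erase.1 he
    obtain ⟨he, hiS⟩ := mem_filter.1 he
    refine ⟨hiS, ?_⟩
    rcases mem_splice.1 he with ⟨heF, -⟩ | ⟨heG, hiX⟩
    · exact arcClosed_treeVerts hF ha _ heF hiS
    · exact hXS (mem_treeVerts_of_mem hG.1 heG hiX fun h => hne (by subst h; rw [hx_arc j heG]))
  · intro j hj
    obtain ⟨hne, hj⟩ := mem_erase.1 hj
    rcases mem_splice.1 (mem_filter.1 hj).1 with ⟨-, h⟩ | ⟨h, -⟩
    exacts [h hxX, hne (by rw [hx_arc j h])]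
  · intro i hiS hix
    suffices ∃ j, (i, j) ∈ splice F G X from this.imp fun j hj =>
      mem_erase.2 ⟨fun h => hix (Prod.mk_inj.1 h).1, mem_filter.2 ⟨hj, hiS⟩⟩
    by_cases hiX : i ∈ X
    · obtain ⟨j, hj⟩ := exists_mem_of_mem_treeVerts hx.mem hiX
      exact ⟨j, mem_splice.2 (.inr ⟨hj, hiX⟩)⟩
    · obtain ⟨j, hj, -⟩ :=
        (mem_treeVerts.1 hiS).cases_head.resolve_left fun h => hiX (h ▸ haX)
      exact ⟨j, mem_splice.2 (.inl ⟨hj, hiX⟩)⟩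

theorem IsMinCrossArc.isCTreeOn (hx : IsMinCrossArc F G x w) (hF : IsEForest F)
    (hG : IsEForest G) (hFE : F ⊆ E) (hGE : G ⊆ E) (haX : rootOf F x ∈ treeVerts G x) :
    IsCTreeOn E ((splice F G (treeVerts G x)).filter (·.1 ∈ treeVerts F (rootOf F x)))
      (treeVerts F (rootOf F x)) x := by
  have hxX : x ∈ treeVerts G x := self_mem_treeVerts
  have hmem : (x, w) ∈ (splice F G (treeVerts G x)).filter (·.1 ∈ treeVerts F (rootOf F x)) :=
    mem_filter.2 ⟨mem_splice.2 (.inr ⟨hx.mem, hxX⟩), hx.treeVerts_subset hF hxX⟩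
  exact ⟨w, hx.not_mem_treeVerts hF, _, hx.isTreeOn_erase hF hG hFE hGE haX, hGE hx.mem,
    (insert_erase hmem).symm⟩

theorem IsMinCrossArc.card_rootSet_splice_add (hx : IsMinCrossArc F G x w) (hF : IsEForest F) :
    #(rootSet (splice F G (treeVerts G x))) + (if rootOf F x ∈ treeVerts G x then 1 else 0) =
      #(rootSet F) := by
  have hsplit := card_filter_add_card_filter_not (s := rootSet F) (· ∈ treeVerts G x)
  rw [filter_rootSet_eq_of_subset_treeVerts (rootOf_mem_rootSet hF x) (hx.treeVerts_subset hF),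
    filter_singleton] at hsplit
  rw [card_rootSet_splice, filter_rootSet_treeVerts_eq_empty hx.mem]
  split_ifs at hsplit ⊢ <;> simp only [card_singleton, card_empty] at hsplit ⊢ <;> omega

theorem IsMinCrossArc.card_rootSet_splice_swap (hx : IsMinCrossArc F G x w) (hF : IsEForest F) :
    #(rootSet (splice G F (treeVerts G x))) =
      #(rootSet G) + (if rootOf F x ∈ treeVerts G x then 1 else 0) := by
  have hsplit := card_filter_add_card_filter_not (s := rootSet G) (· ∈ treeVerts G x)
  rw [filter_rootSet_treeVerts_eq_empty hx.mem] at hsplit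
  rw [card_rootSet_splice, filter_rootSet_eq_of_subset_treeVerts (rootOf_mem_rootSet hF x)
    (hx.treeVerts_subset hF), filter_singleton]
  split_ifs <;> simp only [card_singleton, card_empty] at hsplit ⊢ <;> omega

theorem exists_isCTreeOn_aweight_le (hF : F ∈ FSet E k)
    (hmin : ∀ F' ∈ FSet E k, aweight v F ≤ aweight v F') (hk : 1 ≤ k)
    (hG : G ∈ FSet E (k - 1)) :
    ∃ a ∈ rootSet F, ∃ q CT, IsCTreeOn E CT (treeVerts F a) q ∧
      aweight v F - aweight v (treeArcs F a) + aweight v CT ≤ aweight v G := by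
  obtain ⟨hFE, hF, hFk⟩ := hF
  induction hn : #(G \ F) using Nat.strong_induction_on generalizing G with
  | _ n ih =>
  obtain ⟨hGE, hG, hGk⟩ := hG
  obtain ⟨x, w, hx⟩ := exists_isMinCrossArc hF hG (by omega)
  have hroots₁ := hx.card_rootSet_splice_add hF
  have hroots₂ := hx.card_rootSet_splice_swap hF
  have hsum := aweight_splice_add_aweight_splice (v := v) (A := F) (B := G) (X := treeVerts G x)
  have hGF : IsEForest (splice G F (treeVerts G x)) :=
    hG.splice_of_arcClosed_left hF (arcClosed_not_mem_treeVerts G x)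
  by_cases haX : rootOf F x ∈ treeVerts G x
  · rw [if_pos haX] at hroots₁ hroots₂
    have hle := hmin _ ⟨splice_subset hGE hFE, hGF, by omega⟩
    refine ⟨rootOf F x, rootOf_mem_rootSet hF x, x, _, hx.isCTreeOn hF hG hFE hGE haX, ?_⟩
    rw [← aweight_splice_treeVerts fun e he => (mem_filter.1 he).2,
      splice_filter_splice (hx.treeVerts_subset hF)]
    linarith
  · rw [if_neg haX] at hroots₁ hroots₂
    have hle := hmin _ ⟨splice_subset hFE hGE, hx.isEForest_splice hF hG, by omega⟩
    obtain ⟨a, ha, q, CT, hCT, hCT_le⟩ :=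
      ih _ (hn ▸ card_sdiff_splice_lt hx.mem (hx.not_mem hF) self_mem_treeVerts)
        ⟨splice_subset hGE hFE, hGF, by omega⟩ rfl
    exact ⟨a, ha, q, CT, hCT, by linarith⟩

end Exchange

variable {α : Type*} [Fintype α] [DecidableEq α]

theorem statement4_general (v : α → α → ℝ) (E : Finset (α × α))
    (k : ℕ) (hk : 1 ≤ k) (F : Finset (α × α)) (hF : IsMinForest v E k F) :
    phi v E (k - 1) - phi v E k =
      ⨅ l ∈ rootSet F, (lamCirc v E (treeVerts F l) - lamBul v E (treeVerts F l)) := by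
  have hφ : phi v E k = aweight v F := hF.2.symm
  apply le_antisymm
  · refine le_iInf₂ fun l hl => ?_
    rw [hφ, lamBul_treeVerts_eq hF hl]
    exact phi_sub_one_sub_le hF.1 hl
  · rw [hφ, EReal.le_sub_iff_add_le (.inl (EReal.coe_ne_bot _)) (.inl (EReal.coe_ne_top _))]
    refine le_minW fun G hG => ?_
    obtain ⟨a, ha, q, CT, hCT, hle⟩ :=
      exists_isCTreeOn_aweight_le hF.1 (fun _ => hF.aweight_le) hk hG
    calc (⨅ l ∈ rootSet F, (lamCirc v E (treeVerts F l) - lamBul v E (treeVerts F l)))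
          + aweight v F
        ≤ lamCirc v E (treeVerts F a) - aweight v (treeArcs F a) + aweight v F := by
          rw [← lamBul_treeVerts_eq hF ha]
          exact add_le_add_left (iInf₂_le a ha) _
      _ ≤ aweight v CT - aweight v (treeArcs F a) + aweight v F :=
          add_le_add_left (EReal.sub_le_sub (lamCirc_le hCT) le_rfl) _
      _ ≤ aweight v G := by
          exact_mod_cast (by linarith :
            aweight v CT - aweight v (treeArcs F a) + aweight v F ≤ aweight v G)

/-- Corollary 1.  If `F ∈ 𝓕̃^k` and `𝓕^{k-1} ≠ ∅`, then
`φ^{k-1} - φ^k = min_{l ∈ K_F} (λ^∘_{V(T^F_l)} - λ^•_{V(T^F_l)})`. -/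
theorem statement4 (v : α → α → ℝ) (E : Finset (α × α)) (hE : ∀ i, (i, i) ∉ E)
    (k : ℕ) (hk : 1 ≤ k) (F : Finset (α × α)) (hF : IsMinForest v E k F)
    (hne : (FSet E (k - 1)).Nonempty) :
    phi v E (k - 1) - phi v E k =
      ⨅ l ∈ rootSet F, (lamCirc v E (treeVerts F l) - lamBul v E (treeVerts F l)) :=
  statement4_general v E k hk F hF

end BarrierForests
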